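/- (Theorem 2, excess risk bound for direct weight aggregation.) Let ℓ : ℝ^{d×k} → ℝ be convex and Fréchet differentiable, with gradient ∇ℓ(W) (with respect to the Frobenius inner product) satisfying ‖∇ℓ(W)‖_F ≤ D for all W. Let ΔW* be a global minimizer of ℓ. Let N, S, t_agg ≥ 1 be natural numbers and α ≥ 0 a learning rate. Let W₀ ∈ ℝ^{d×k} and let the directly aggregated weights be W_agg = W₀ − (α/N) Σ_{i=1}^N Σ_{j=1}^S Σ_{t=1}^{t_agg} G_{i,j,t}, where each G_{i,j,t} ∈ ℝ^{d×k} satisfies ‖G_{i,j,t}‖_F ≤ D. Then |ℓ(W_agg) − ℓ(ΔW*)| ≤ α·D²·S·t_agg + c, where c = D·(‖W₀‖_F + ‖ΔW*‖_F); i.e., the excess risk of direct weight averaging is O(S·t_agg), independently of the number of clients N. -/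

import Mathlib

/-!
By convexity, `ℓ W_agg - ℓ ΔW* ≤ ⟨∇ℓ(W_agg), W_agg - ΔW*⟩_F ≤ D ‖W_agg - ΔW*‖_F` (Cauchy–Schwarz),
and this excess is nonnegative since `ΔW*` is a minimizer. The averaged update
`(α/N) Σ_{i,j,t} G_{i,j,t}` is a mean over the `N` clients of vectors of norm at most
`S t_agg D`, so `‖W_agg‖_F ≤ ‖W₀‖_F + α S t_agg D`, and the bound does not depend on `N`.
-/

open Matrix

-- Equip matrices with the Frobenius norm.
attribute [local instance] Matrix.frobeniusNormedAddCommGroup Matrix.frobeniusNormedSpace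

/-- The Frobenius inner product `⟨M, N⟩_F = tr(Mᵀ N)`. -/
noncomputable def frobInner {d k : ℕ} (M N : Matrix (Fin d) (Fin k) ℝ) : ℝ :=
  (Mᵀ * N).trace

lemma ConvexOn.sub_le_of_hasFDerivAt {E : Type*} [NormedAddCommGroup E] [NormedSpace ℝ E]
    {f : E → ℝ} (hf : ConvexOn ℝ Set.univ f) {f' : E →L[ℝ] ℝ} {x : E} (hx : HasFDerivAt f f' x)
    (y : E) : f x - f y ≤ f' (x - y) := by
  let φ : ℝ →ᵃ[ℝ] E := AffineMap.lineMap y x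
  have hφ : HasDerivAt φ (x - y) 1 := by
    have : ⇑φ = fun t : ℝ => t • (x - y) + y := funext (AffineMap.lineMap_apply_module' y x)
    simpa [this] using ((hasDerivAt_id (1 : ℝ)).smul_const (x - y)).add_const y
  have hfφ : ConvexOn ℝ Set.univ (f ∘ φ) := by
    simpa using hf.comp_affineMap φ
  have := hfφ.slope_le_of_hasDerivAt (Set.mem_univ 0) (Set.mem_univ 1) zero_lt_one
    (hx.comp_hasDerivAt_of_eq 1 hφ (AffineMap.lineMap_apply_one y x).symm)
  simpa [slope_def_field, φ] using this

lemma frobInner_le_norm_mul_norm {d k : ℕ} (M N : Matrix (Fin d) (Fin k) ℝ) :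
    frobInner M N ≤ ‖M‖ * ‖N‖ := by
  have h := real_inner_le_norm (WithLp.toLp 2 fun i => WithLp.toLp 2 (M i))
    (WithLp.toLp 2 fun i => WithLp.toLp 2 (N i))
  convert h using 1
  · simp only [frobInner, Matrix.trace, Matrix.diag, Matrix.mul_apply, Matrix.transpose_apply,
      PiLp.inner_apply, RCLike.inner_apply, conj_trivial, mul_comm]
    exact Finset.sum_comm
  · rfl

lemma norm_sum_le_card_mul {ι E : Type*} [Fintype ι] [SeminormedAddCommGroup E] {f : ι → E}
    {C : ℝ} (hf : ∀ i, ‖f i‖ ≤ C) : ‖∑ i, f i‖ ≤ Fintype.card ι * C := by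
  simpa using norm_sum_le_of_le Finset.univ fun i _ => hf i

lemma norm_div_card_smul_sum_le {ι E : Type*} [Fintype ι] [SeminormedAddCommGroup E]
    [NormedSpace ℝ E] {f : ι → E} {α C : ℝ} (hα : 0 ≤ α) (hC : 0 ≤ C) (hf : ∀ i, ‖f i‖ ≤ C) :
    ‖(α / Fintype.card ι) • ∑ i, f i‖ ≤ α * C := by
  rw [norm_smul, Real.norm_of_nonneg (by positivity)]
  calc α / Fintype.card ι * ‖∑ i, f i‖ ≤ α / Fintype.card ι * (Fintype.card ι * C) := by
        gcongr; exact norm_sum_le_card_mul hf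
    _ = α * C * (Fintype.card ι / Fintype.card ι) := by ring
    _ ≤ α * C := mul_le_of_le_one_right (by positivity) (div_self_le_one _)

theorem direct_fedavg_excess_risk_general (d k N S tagg : ℕ)
    (α D : ℝ) (hα : 0 ≤ α)
    (ℓ : Matrix (Fin d) (Fin k) ℝ → ℝ)
    (hconv : ConvexOn ℝ Set.univ ℓ)
    (g : Matrix (Fin d) (Fin k) ℝ → Matrix (Fin d) (Fin k) ℝ)
    (hdiff : ∀ W : Matrix (Fin d) (Fin k) ℝ,
      ∃ L : Matrix (Fin d) (Fin k) ℝ →L[ℝ] ℝ,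
        HasFDerivAt ℓ L W ∧ ∀ H, L H = frobInner (g W) H)
    (hD : ∀ W, ‖g W‖ ≤ D)
    (ΔWstar : Matrix (Fin d) (Fin k) ℝ)
    (hmin : ∀ W, ℓ ΔWstar ≤ ℓ W)
    (W₀ : Matrix (Fin d) (Fin k) ℝ)
    (G : Fin N → Fin S → Fin tagg → Matrix (Fin d) (Fin k) ℝ)
    (hG : ∀ i j t, ‖G i j t‖ ≤ D) :
    |ℓ (W₀ - (α / (N : ℝ)) • ∑ i, ∑ j, ∑ t, G i j t) - ℓ ΔWstar| ≤
      α * D ^ 2 * S * tagg + D * (‖W₀‖ + ‖ΔWstar‖) := by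
  have hD₀ : 0 ≤ D := (norm_nonneg _).trans (hD W₀)
  set Wagg := W₀ - (α / (N : ℝ)) • ∑ i, ∑ j, ∑ t, G i j t
  have hclient : ∀ i, ‖∑ j, ∑ t, G i j t‖ ≤ S * (tagg * D) := fun i => by
    simpa using norm_sum_le_card_mul fun j => norm_sum_le_card_mul (hG i j)
  have hupdate : ‖(α / (N : ℝ)) • ∑ i, ∑ j, ∑ t, G i j t‖ ≤ α * (S * (tagg * D)) := by
    simpa using norm_div_card_smul_sum_le hα (by positivity) hclient
  have hdist : ‖Wagg - ΔWstar‖ ≤ ‖W₀‖ + α * (S * (tagg * D)) + ‖ΔWstar‖ :=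
    (norm_sub_le _ _).trans (by linarith [norm_sub_le W₀ ((α / (N : ℝ)) • ∑ i, ∑ j, ∑ t, G i j t)])
  obtain ⟨L, hL, hLg⟩ := hdiff Wagg
  rw [abs_of_nonneg (sub_nonneg.2 (hmin Wagg))]
  calc ℓ Wagg - ℓ ΔWstar ≤ frobInner (g Wagg) (Wagg - ΔWstar) :=
        hLg (Wagg - ΔWstar) ▸ hconv.sub_le_of_hasFDerivAt hL ΔWstar
    _ ≤ D * ‖Wagg - ΔWstar‖ :=
        (frobInner_le_norm_mul_norm _ _).trans (mul_le_mul_of_nonneg_right (hD _) (norm_nonneg _))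
    _ ≤ D * (‖W₀‖ + α * (S * (tagg * D)) + ‖ΔWstar‖) := by gcongr
    _ = α * D ^ 2 * S * tagg + D * (‖W₀‖ + ‖ΔWstar‖) := by ring

/-- Theorem 2, excess risk bound for direct weight aggregation: for a
convex, Fréchet differentiable loss `ℓ` with Frobenius gradient bounded by `D`, a
global minimizer `ΔW*`, and direct FedAvg aggregation
`W_agg = W₀ − (α/N) Σ_{i,j,t} G_{i,j,t}` with bounded gradients, the excess risk
satisfies `|ℓ(W_agg) − ℓ(ΔW*)| ≤ α·D²·S·t_agg + c` with
`c = D·(‖W₀‖_F + ‖ΔW*‖_F)` — independent of the number of clients `N`. -/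
theorem direct_fedavg_excess_risk (d k N S tagg : ℕ)
    (hN : 1 ≤ N) (hS : 1 ≤ S) (htagg : 1 ≤ tagg)
    (α D : ℝ) (hα : 0 ≤ α)
    (ℓ : Matrix (Fin d) (Fin k) ℝ → ℝ)
    (hconv : ConvexOn ℝ Set.univ ℓ)
    (g : Matrix (Fin d) (Fin k) ℝ → Matrix (Fin d) (Fin k) ℝ)
    (hdiff : ∀ W : Matrix (Fin d) (Fin k) ℝ,
      ∃ L : Matrix (Fin d) (Fin k) ℝ →L[ℝ] ℝ,
        HasFDerivAt ℓ L W ∧ ∀ H, L H = frobInner (g W) H)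
    (hD : ∀ W, ‖g W‖ ≤ D)
    (ΔWstar : Matrix (Fin d) (Fin k) ℝ)
    (hmin : ∀ W, ℓ ΔWstar ≤ ℓ W)
    (W₀ : Matrix (Fin d) (Fin k) ℝ)
    (G : Fin N → Fin S → Fin tagg → Matrix (Fin d) (Fin k) ℝ)
    (hG : ∀ i j t, ‖G i j t‖ ≤ D) :
    |ℓ (W₀ - (α / (N : ℝ)) • ∑ i, ∑ j, ∑ t, G i j t) - ℓ ΔWstar| ≤
      α * D ^ 2 * S * tagg + D * (‖W₀‖ + ‖ΔWstar‖) :=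
  direct_fedavg_excess_risk_general d k N S tagg α D hα ℓ hconv g hdiff hD ΔWstar hmin W₀ G hG
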